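/- arXiv:1307.4472 — 2 statements merged into one kernel-verified Lean document; each statement's English description precedes it below -/
import Mathlib

section
/- Let S be a commutative semiring. A word function f : Σ* → S is recognizable by a weighted automaton over S if and only if f belongs to some finitely generated stable subsemimodule of S^{Σ*}. (Jacob's theorem, full equivalence.) -/
open Matrix

def wordProd {S : Type*} [CommSemiring S] {A : Type*} {r : ℕ}
    (μ : A → Matrix (Fin r) (Fin r) S) (w : List A) : Matrix (Fin r) (Fin r) S :=
  (w.map μ).prod

lemma wordProd_nil {S : Type*} [CommSemiring S] {A : Type*} {r : ℕ}
    (μ : A → Matrix (Fin r) (Fin r) S) : wordProd μ [] = 1 := rfl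

lemma wordProd_cons {S : Type*} [CommSemiring S] {A : Type*} {r : ℕ}
    (μ : A → Matrix (Fin r) (Fin r) S) (a : A) (w : List A) :
    wordProd μ (a :: w) = μ a * wordProd μ w := by simp [wordProd]

lemma wordProd_append {S : Type*} [CommSemiring S] {A : Type*} {r : ℕ}
    (μ : A → Matrix (Fin r) (Fin r) S) (w u : List A) :
    wordProd μ (w ++ u) = wordProd μ w * wordProd μ u := by simp [wordProd]

def shiftLM {S A : Type*} [CommSemiring S] (w : List A) :
    (List A → S) →ₗ[S] (List A → S) where
  toFun g u := g (w ++ u)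
  map_add' _ _ := rfl
  map_smul' _ _ := rfl

/-- Jacob's theorem: a word function `f : Σ* → S` is recognizable by a weighted
automaton over `S` iff it lies in some finitely generated stable subsemimodule of
`S^{Σ*}`. -/
theorem recognizable_iff_mem_fg_stable_submodule {S A : Type*} [CommSemiring S] [Fintype A]
    (f : List A → S) :
    (∃ (r : ℕ) (α γ : Fin r → S) (μ : A → Matrix (Fin r) (Fin r) S),
      ∀ w : List A, f w = α ⬝ᵥ (wordProd μ w *ᵥ γ)) ↔
    (∃ M : Submodule S (List A → S), M.FG ∧ f ∈ M ∧
      ∀ (w : List A) (g : List A → S), g ∈ M → (fun u => g (w ++ u)) ∈ M) := by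
  constructor
  · rintro ⟨r, α, γ, μ, h⟩
    set g : Fin r → (List A → S) := fun i u => (wordProd μ u *ᵥ γ) i with hg
    refine ⟨Submodule.span S (Set.range g), Submodule.fg_span (Set.finite_range g), ?_, ?_⟩
    · rw [Submodule.mem_span_range_iff_exists_fun]
      refine ⟨α, ?_⟩
      funext u
      simp [h u, dotProduct, g, Finset.sum_apply, Pi.smul_apply, smul_eq_mul]
    · intro w p hp
      have hle : Submodule.span S (Set.range g) ≤
          Submodule.comap (shiftLM (S := S) w) (Submodule.span S (Set.range g)) := by
        rw [Submodule.span_le]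
        rintro _ ⟨i, rfl⟩
        simp only [Set.mem_setOf_eq, SetLike.mem_coe, Submodule.mem_comap]
        rw [Submodule.mem_span_range_iff_exists_fun]
        refine ⟨fun j => wordProd μ w i j, ?_⟩
        funext u
        simp only [Finset.sum_apply, Pi.smul_apply, smul_eq_mul, shiftLM, LinearMap.coe_mk,
          AddHom.coe_mk, g, wordProd_append, mulVec, dotProduct, Matrix.mul_apply,
          Finset.sum_mul]
        rw [Finset.sum_comm]
        simp [Finset.mul_sum, mul_assoc]
      exact hle hp
  · rintro ⟨M, hFG, hfM, hstab⟩
    obtain ⟨r, g, hspan⟩ := Submodule.fg_iff_exists_fin_generating_family.mp hFG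
    have hgM : ∀ i, g i ∈ M := fun i =>
      hspan ▸ Submodule.subset_span (Set.mem_range_self i)
    have hα : ∃ α : Fin r → S, ∑ i, α i • g i = f := by
      rw [← Submodule.mem_span_range_iff_exists_fun, hspan]; exact hfM
    obtain ⟨α, hα⟩ := hα
    have hμ : ∀ (a : A) (i : Fin r), ∃ c : Fin r → S,
        ∑ j, c j • g j = fun u => g i (a :: u) := by
      intro a i
      rw [← Submodule.mem_span_range_iff_exists_fun, hspan]
      simpa using hstab [a] (g i) (hgM i)
    choose μ hμ using hμ
    set γ : Fin r → S := fun i => g i [] with hγ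
    have key : ∀ (w : List A) (i : Fin r),
        g i w = (wordProd (fun a => Matrix.of (μ a)) w *ᵥ γ) i := by
      intro w
      induction w with
      | nil => intro i; simp [wordProd_nil, γ]
      | cons a w ih =>
        intro i
        have h1 : g i (a :: w) = ∑ j, μ a i j * g j w := by
          have := congrFun (hμ a i) w
          simpa [Finset.sum_apply, smul_eq_mul] using this.symm
        rw [h1, wordProd_cons]
        simp only [mulVec, dotProduct, Matrix.mul_apply, Matrix.of_apply, Finset.sum_mul]
        rw [Finset.sum_comm]
        simp [ih, mulVec, dotProduct, Finset.mul_sum, mul_assoc]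
    refine ⟨r, α, γ, fun a => Matrix.of (μ a), ?_⟩
    intro w
    rw [← hα]
    simp [Finset.sum_apply, dotProduct, key w, smul_eq_mul]
end

section
/- Let F be a field and f : Σ* → F a word function whose Hankel matrix H(f) has finite rank r (i.e., the row functions u ↦ f(u ∘ ·) span a subspace of F^{Σ*} of dimension at most r). Then f is recognized by a weighted automaton of size at most r over F. -/
/-!
The rows `v ↦ f (u ++ v)` of the Hankel matrix span a subspace `W` of `List A → F` that is
closed under the left shifts `h ↦ h ∘ List.cons σ`, since shifting the row of `u` by `σ` gives
the row of `u ++ [σ]`. The rank hypothesis makes `W` finite-dimensional of dimension `s ≤ r`.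
In a basis of `W`, the shifts become the transition matrices, evaluation at the empty word
becomes the final vector, and the coordinates of `f`, the row of the empty word, become the
initial vector; induction on `w`, via `x (σ :: w) = (shift σ x) w`, shows that the automaton
computes every `x ∈ W`, in particular `f`.
-/

open Matrix

section WordProd

variable {S A : Type*} [CommSemiring S] {r : ℕ} (μ : A → Matrix (Fin r) (Fin r) S)

@[simp]
theorem wordProd_nil_s5 : wordProd μ [] = 1 := rfl

@[simp]
theorem wordProd_cons_s5 (σ : A) (w : List A) : wordProd μ (σ :: w) = μ σ * wordProd μ w := rfl

end WordProd

section ShiftInvariant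

open LinearMap

variable {R A : Type*} [CommSemiring R] {W : Submodule R (List A → R)}
  (hW : ∀ σ : A, ∀ x ∈ W, funLeft R R (List.cons σ) x ∈ W)
  {s : ℕ} (b : Module.Basis (Fin s) R W)

noncomputable def shiftMatrix (σ : A) : Matrix (Fin s) (Fin s) R :=
  (toMatrix b b ((funLeft R R (List.cons σ)).restrict (hW σ)))ᵀ

theorem apply_nil_eq_dotProduct (x : W) :
    (x : List A → R) [] = b.repr x ⬝ᵥ fun i => (b i : List A → R) [] := by
  calc (x : List A → R) [] = ((∑ i, b.repr x i • b i : W) : List A → R) [] := by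
        rw [b.sum_repr]
    _ = _ := by
      simp only [Submodule.coe_sum, Submodule.coe_smul, Finset.sum_apply, Pi.smul_apply,
        smul_eq_mul, dotProduct]

theorem apply_eq_dotProduct_wordProd (w : List A) (x : W) :
    (x : List A → R) w =
      b.repr x ⬝ᵥ (wordProd (shiftMatrix hW b) w *ᵥ fun i => (b i : List A → R) []) := by
  induction w generalizing x with
  | nil => simpa using apply_nil_eq_dotProduct b x
  | cons σ w ih =>
    let T := (funLeft R R (List.cons σ)).restrict (hW σ)
    calc (x : List A → R) (σ :: w) = (T x : List A → R) w := rfl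
      _ = b.repr (T x) ⬝ᵥ
            (wordProd (shiftMatrix hW b) w *ᵥ fun i => (b i : List A → R) []) := ih (T x)
      _ = _ := by
        symm
        rw [wordProd_cons_s5, ← mulVec_mulVec, dotProduct_mulVec, shiftMatrix, vecMul_transpose,
          toMatrix_mulVec_repr]

end ShiftInvariant

section Hankel

open LinearMap

variable {R A : Type*} [Semiring R]

def hankelRowSpace (f : List A → R) : Submodule R (List A → R) :=
  Submodule.span R (Set.range fun u v => f (u ++ v))

theorem self_mem_hankelRowSpace (f : List A → R) : f ∈ hankelRowSpace f :=
  Submodule.subset_span ⟨[], rfl⟩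

theorem funLeft_cons_mem_hankelRowSpace (f : List A → R) (σ : A) :
    ∀ x ∈ hankelRowSpace f, funLeft R R (List.cons σ) x ∈ hankelRowSpace f := by
  refine Submodule.span_le (p := (hankelRowSpace f).comap (funLeft R R (List.cons σ))).2 ?_
  rintro _ ⟨u, rfl⟩
  exact Submodule.subset_span ⟨u ++ [σ], by funext v; simp [funLeft]⟩

end Hankel

theorem recognizable_of_hankel_finite_rank_general {F A : Type*} [Field F]
    (f : List A → F) (r : ℕ)
    (h : ∃ g : Fin r → (List A → F),
      ∀ u : List A, (fun v : List A => f (u ++ v)) ∈ Submodule.span F (Set.range g)) :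
    ∃ (s : ℕ) (α γ : Fin s → F) (μ : A → Matrix (Fin s) (Fin s) F),
      s ≤ r ∧ ∀ w : List A, f w = α ⬝ᵥ (wordProd μ w *ᵥ γ) := by
  obtain ⟨g, hg⟩ := h
  have hle : hankelRowSpace f ≤ Submodule.span F (Set.range g) :=
    Submodule.span_le.2 (Set.range_subset_iff.2 hg)
  have := FiniteDimensional.span_of_finite F (Set.finite_range g)
  have : FiniteDimensional F (hankelRowSpace f) := Submodule.finiteDimensional_of_le hle
  let b := Module.finBasis F (hankelRowSpace f)
  refine ⟨_, b.repr ⟨f, self_mem_hankelRowSpace f⟩, fun i => (b i : List A → F) [],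
    shiftMatrix (funLeft_cons_mem_hankelRowSpace f) b, ?_,
    fun w => apply_eq_dotProduct_wordProd _ b w ⟨f, self_mem_hankelRowSpace f⟩⟩
  calc Module.finrank F (hankelRowSpace f)
      ≤ Module.finrank F (Submodule.span F (Set.range g)) := Submodule.finrank_mono hle
    _ ≤ r := (finrank_range_le_card g).trans_eq (Fintype.card_fin r)

/-- If the rows of the Hankel matrix of `f` span a subspace of dimension at most `r`
(they all lie in the span of `r` functions), then `f` is recognized by a weighted
automaton of size at most `r`. -/
theorem recognizable_of_hankel_finite_rank {F A : Type*} [Field F] [Fintype A]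
    (f : List A → F) (r : ℕ)
    (h : ∃ g : Fin r → (List A → F),
      ∀ u : List A, (fun v : List A => f (u ++ v)) ∈ Submodule.span F (Set.range g)) :
    ∃ (s : ℕ) (α γ : Fin s → F) (μ : A → Matrix (Fin s) (Fin s) F),
      s ≤ r ∧ ∀ w : List A, f w = α ⬝ᵥ (wordProd μ w *ᵥ γ) :=
  recognizable_of_hankel_finite_rank_general f r h
end
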